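/- arXiv:1509.09227 — 3 statements merged into one kernel-verified Lean document; each statement's English description precedes it below -/
import Mathlib

section
/- Consider an n-bus network (n ≥ 2) with admittance matrix Y ∈ ℂ^{n×n}, slack bus 0 with fixed voltage v₀ ≠ 0, and all other buses PQ buses with zero specified power injections. Suppose that for every subset S of the non-slack buses {1,…,n−1}, writing T = {1,…,n−1} \ S: (i) the principal submatrix Y_{T,T} of Y on rows and columns T is invertible, so that there is a unique vector V^S ∈ ℂⁿ with V^S_0 = v₀, V^S_i = 0 for i ∈ S, and (Y V^S)_i = 0 for all i ∈ T; and (ii) V^S_i ≠ 0 for every i ∈ T. Then the map S ↦ V^S is injective, every V^S is a power flow solution, and hence the network has at least 2^{n−1} distinct power flow solutions. -/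
/-- Zero-injection all-PQ network with slack bus 0 and voltage v₀ ≠ 0. Suppose for every
subset S of the non-slack buses (with complement T among the non-slack buses): (i) the
principal submatrix Y_{T,T} is invertible, so that there is a unique vector `VS S` with
slack voltage v₀, zero voltages on S, and zero current injections on T; and (ii) `VS S`
is nonvanishing on T. Then S ↦ VS S is injective, every VS S is a power flow solution,
and the network has at least 2^(n-1) distinct power flow solutions. -/
theorem stmt3 (n : ℕ) (hn : 2 ≤ n) [NeZero n] (Y : Matrix (Fin n) (Fin n) ℂ)
    (v₀ : ℂ) (hv₀ : v₀ ≠ 0)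
    (VS : Finset (Fin n) → (Fin n → ℂ))
    (hinv : ∀ S : Finset (Fin n), (0 : Fin n) ∉ S →
      IsUnit (Y.submatrix (Subtype.val : {i : Fin n // i ≠ 0 ∧ i ∉ S} → Fin n)
        (Subtype.val : {i : Fin n // i ≠ 0 ∧ i ∉ S} → Fin n)))
    (hVS : ∀ S : Finset (Fin n), (0 : Fin n) ∉ S →
      VS S 0 = v₀ ∧ (∀ i ∈ S, VS S i = 0) ∧
        (∀ i, i ≠ 0 → i ∉ S → Y.mulVec (VS S) i = 0))
    (huniq : ∀ S : Finset (Fin n), (0 : Fin n) ∉ S → ∀ V : Fin n → ℂ,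
      (V 0 = v₀ ∧ (∀ i ∈ S, V i = 0) ∧ (∀ i, i ≠ 0 → i ∉ S → Y.mulVec V i = 0)) → V = VS S)
    (hnz : ∀ S : Finset (Fin n), (0 : Fin n) ∉ S → ∀ i, i ≠ 0 → i ∉ S → VS S i ≠ 0) :
    (∀ S₁ S₂ : Finset (Fin n), (0 : Fin n) ∉ S₁ → (0 : Fin n) ∉ S₂ →
      VS S₁ = VS S₂ → S₁ = S₂) ∧
    (∀ S : Finset (Fin n), (0 : Fin n) ∉ S →
      VS S ∈ {V : Fin n → ℂ | V 0 = v₀ ∧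
        ∀ i, i ≠ 0 → V i * (starRingEnd ℂ) (Y.mulVec V i) = 0}) ∧
    (2 ^ (n - 1) : ℕ∞) ≤
      {V : Fin n → ℂ | V 0 = v₀ ∧
        ∀ i, i ≠ 0 → V i * (starRingEnd ℂ) (Y.mulVec V i) = 0}.encard := by

  have hmem : ∀ S : Finset (Fin n), (0 : Fin n) ∉ S →
      VS S ∈ {V : Fin n → ℂ | V 0 = v₀ ∧
        ∀ i, i ≠ 0 → V i * (starRingEnd ℂ) (Y.mulVec V i) = 0} := by
    intro S hS
    obtain ⟨h0, hz, hc⟩ := hVS S hS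
    refine ⟨h0, fun i hi => ?_⟩
    by_cases hiS : i ∈ S
    · simp [hz i hiS]
    · simp [hc i hi hiS]
  have hinj : ∀ S₁ S₂ : Finset (Fin n), (0 : Fin n) ∉ S₁ → (0 : Fin n) ∉ S₂ →
      VS S₁ = VS S₂ → S₁ = S₂ := by
    intro S₁ S₂ h₁ h₂ he
    have key : ∀ (S : Finset (Fin n)), (0 : Fin n) ∉ S → ∀ i, i ≠ 0 → (i ∈ S ↔ VS S i = 0) := by
      intro S hS i hi
      constructor
      · exact fun h => (hVS S hS).2.1 i h
      · intro h
        by_contra hiS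
        exact hnz S hS i hi hiS h
    ext i
    by_cases hi : i = 0
    · subst hi; simp [h₁, h₂]
    · rw [key S₁ h₁ i hi, key S₂ h₂ i hi, he]
  refine ⟨hinj, hmem, ?_⟩
  set Sol := {V : Fin n → ℂ | V 0 = v₀ ∧
        ∀ i, i ≠ 0 → V i * (starRingEnd ℂ) (Y.mulVec V i) = 0} with hSol
  set A : Set (Finset (Fin n)) := {S | (0 : Fin n) ∉ S} with hA
  have hAcoe : A = ↑((Finset.univ.erase (0 : Fin n)).powerset) := by
    ext S
    simp only [hA, Set.mem_setOf_eq, Finset.coe_powerset, Set.mem_preimage,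
      Set.mem_powerset_iff, Finset.coe_subset, Finset.mem_coe]
    constructor
    · intro h i hiS
      exact Finset.mem_erase.mpr ⟨fun h0 => h (h0 ▸ hiS), Finset.mem_univ i⟩
    · intro h h0
      exact (Finset.mem_erase.mp (h h0)).1 rfl
  have hAcard : A.encard = 2 ^ (n - 1) := by
    rw [hAcoe, Set.encard_coe_eq_coe_finsetCard, Finset.card_powerset,
      Finset.card_erase_of_mem (Finset.mem_univ _), Finset.card_univ, Fintype.card_fin]
    norm_cast
  have hIm : VS '' A ⊆ Sol := by
    rintro _ ⟨S, hS, rfl⟩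
    exact hmem S hS
  have hInjOn : Set.InjOn VS A := fun S₁ h₁ S₂ h₂ he => hinj S₁ S₂ h₁ h₂ he
  calc (2 ^ (n - 1) : ℕ∞) = A.encard := hAcard.symm
    _ = (VS '' A).encard := (hInjOn.encard_image).symm
    _ ≤ Sol.encard := Set.encard_mono hIm
end

section
/- Consider an n-bus network with admittance matrix Y ∈ ℂ^{n×n} whose bus set is partitioned as {0} ∪ A ∪ B, where 0 is the slack bus with fixed voltage v₀, and suppose Y_{ab} = Y_{ba} = 0 for all a ∈ A and b ∈ B (the two subnetworks share only the slack bus). Each non-slack bus i is either a PQ bus with specified complex injection s_i, enforcing V_i · conj((YV)_i) = s_i, or a PV bus with specified active power p_i and voltage magnitude w_i, enforcing Re(V_i · conj((YV)_i)) = p_i and |V_i| = w_i. Let Y^A (resp. Y^B) be the principal submatrix of Y on {0} ∪ A (resp. {0} ∪ B), with the same bus specifications and slack voltage v₀. Then the map sending a power flow solution V of the full network to the pair of its restrictions to {0} ∪ A and {0} ∪ B is a bijection between the solution set of the full network and the Cartesian product of the solution sets of the two subnetworks. -/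
open scoped Classical
open ComplexConjugate Matrix Set Function

/-!
A non-slack bus of the subnetwork `{0} ∪ A` only sees voltages on `{0} ∪ A`, because `Y`
vanishes between `A` and `B`; hence its bus equations read the same in the full network and in
the subnetwork. The two subnetworks overlap only in the slack bus, where both voltages equal
`v₀`, so a pair of subnetwork solutions glues to a unique voltage vector of the full network.
-/

variable {ι : Type*}

theorem Matrix.submatrix_val_mulVec_apply {R : Type*} [Fintype ι] [NonUnitalNonAssocSemiring R]
    {S : ι → Prop} [DecidablePred S] (Y : Matrix ι ι R) (V : ι → R) {j : Subtype S}
    (hY : ∀ k, ¬S k → Y j k = 0) :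
    (Y.submatrix Subtype.val Subtype.val *ᵥ fun k : Subtype S => V k) j = (Y *ᵥ V) j := by
  simp only [mulVec, dotProduct, submatrix_apply]
  rw [← Fintype.sum_subtype_add_sum_subtype S,
    Fintype.sum_eq_zero (fun k : {k // ¬S k} => Y j k * V k) fun k => by rw [hY k k.2, zero_mul],
    add_zero]

theorem injective_subtype_restrict_prod {β : Type*} {S T : ι → Prop} (hST : ∀ i, S i ∨ T i) :
    Injective fun V : ι → β => ((fun i : Subtype S => V i), fun i : Subtype T => V i) := by
  intro V V' h
  funext i
  rcases hST i with hi | hi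
  · exact congrFun (congrArg Prod.fst h) ⟨i, hi⟩
  · exact congrFun (congrArg Prod.snd h) ⟨i, hi⟩

theorem exists_subtype_restrict_eq {β : Type*} {S T : ι → Prop} (hST : ∀ i, S i ∨ T i)
    (U : Subtype S → β) (W : Subtype T → β)
    (hUW : ∀ i (hS : S i) (hT : T i), U ⟨i, hS⟩ = W ⟨i, hT⟩) :
    ∃ V : ι → β, (fun i : Subtype S => V i) = U ∧ (fun i : Subtype T => V i) = W := by
  refine ⟨fun i => if h : S i then U ⟨i, h⟩ else W ⟨i, (hST i).resolve_left h⟩,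
    funext fun i => dif_pos i.2, funext fun i => ?_⟩
  dsimp only
  split_ifs with h
  exacts [hUW i h i.2, rfl]

theorem apply_eq_zero_of_not_eq_or_mem {R : Type*} [Zero R] {Y : Matrix ι ι R} {o : ι}
    {A B : Set ι} (hcover : ∀ i, i = o ∨ i ∈ A ∨ i ∈ B) (hY : ∀ a ∈ A, ∀ b ∈ B, Y a b = 0) :
    ∀ i, (i = o ∨ i ∈ A) → i ≠ o → ∀ k, ¬(k = o ∨ k ∈ A) → Y i k = 0 := by
  intro i hi hio k hk
  obtain ⟨hko, hkA⟩ := not_or.mp hk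
  exact hY i (hi.resolve_left hio) k (((hcover k).resolve_left hko).resolve_left hkA)

section PowerFlow

variable (PQ : Set ι) (s : ι → ℂ) (p w : ι → ℝ)

/-- The equations of a non-slack bus `i` with voltage `v` and `c = (YV)ᵢ`. -/
def BusEquations (i : ι) (v c : ℂ) : Prop :=
  (i ∈ PQ → v * conj c = s i) ∧ (i ∉ PQ → (v * conj c).re = p i ∧ ‖v‖ = w i)

variable [Fintype ι] (Y : Matrix ι ι ℂ) (o : ι) (v₀ : ℂ)

def powerFlowSolutions : Set (ι → ℂ) :=
  {V | V o = v₀ ∧ ∀ i, i ≠ o → BusEquations PQ s p w i (V i) ((Y *ᵥ V) i)}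

def subnetworkSolutions (S : ι → Prop) [DecidablePred S] (ho : S o) : Set (Subtype S → ℂ) :=
  {W | W ⟨o, ho⟩ = v₀ ∧ ∀ i : Subtype S, i.val ≠ o →
    BusEquations PQ s p w i (W i) ((Y.submatrix Subtype.val Subtype.val *ᵥ W) i)}

variable {PQ s p w Y o v₀}

theorem restrict_mem_subnetworkSolutions_iff {S : ι → Prop} [DecidablePred S] (ho : S o)
    (hY : ∀ i, S i → i ≠ o → ∀ k, ¬S k → Y i k = 0) (V : ι → ℂ) :
    (fun i : Subtype S => V i) ∈ subnetworkSolutions PQ s p w Y o v₀ S ho ↔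
      V o = v₀ ∧ ∀ i, S i → i ≠ o → BusEquations PQ s p w i (V i) ((Y *ᵥ V) i) := by
  refine and_congr Iff.rfl ?_
  simp only [Subtype.forall]
  refine forall₂_congr fun i hi => forall_congr' fun hio => ?_
  rw [submatrix_val_mulVec_apply Y V (hY i hi hio)]

variable [DecidableEq ι] {A B : Set ι}

theorem mem_powerFlowSolutions_iff_restrict_mem (hcover : ∀ i, i = o ∨ i ∈ A ∨ i ∈ B)
    (hY : ∀ a ∈ A, ∀ b ∈ B, Y a b = 0 ∧ Y b a = 0) (V : ι → ℂ) :
    V ∈ powerFlowSolutions PQ s p w Y o v₀ ↔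
      (fun i : {i // i = o ∨ i ∈ A} => V i) ∈
          subnetworkSolutions PQ s p w Y o v₀ _ (Or.inl rfl) ∧
        (fun i : {i // i = o ∨ i ∈ B} => V i) ∈
          subnetworkSolutions PQ s p w Y o v₀ _ (Or.inl rfl) := by
  rw [restrict_mem_subnetworkSolutions_iff _
      (apply_eq_zero_of_not_eq_or_mem hcover fun a ha b hb => (hY a ha b hb).1),
    restrict_mem_subnetworkSolutions_iff _
      (apply_eq_zero_of_not_eq_or_mem (fun i => (hcover i).imp_right Or.symm)
        fun b hb a ha => (hY a ha b hb).2)]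
  constructor
  · rintro ⟨hV0, hV⟩
    exact ⟨⟨hV0, fun i _ => hV i⟩, ⟨hV0, fun i _ => hV i⟩⟩
  · rintro ⟨⟨hV0, hA⟩, ⟨-, hB⟩⟩
    refine ⟨hV0, fun i hio => ?_⟩
    rcases (hcover i).resolve_left hio with hi | hi
    exacts [hA i (Or.inr hi) hio, hB i (Or.inr hi) hio]

theorem bijOn_restrict_powerFlowSolutions (hcover : ∀ i, i = o ∨ i ∈ A ∨ i ∈ B)
    (hAB : Disjoint A B) (hY : ∀ a ∈ A, ∀ b ∈ B, Y a b = 0 ∧ Y b a = 0) :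
    BijOn (fun V : ι → ℂ => ((fun i : {i // i = o ∨ i ∈ A} => V i),
        (fun i : {i // i = o ∨ i ∈ B} => V i)))
      (powerFlowSolutions PQ s p w Y o v₀)
      (subnetworkSolutions PQ s p w Y o v₀ _ (Or.inl rfl) ×ˢ
        subnetworkSolutions PQ s p w Y o v₀ _ (Or.inl rfl)) := by
  have hsolutions := mem_powerFlowSolutions_iff_restrict_mem (PQ := PQ) (s := s) (p := p)
    (w := w) (v₀ := v₀) hcover hY
  have hcoverAB : ∀ i, (i = o ∨ i ∈ A) ∨ (i = o ∨ i ∈ B) := fun i =>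
    (hcover i).elim (.inl ∘ .inl) (.imp .inr .inr)
  refine ⟨fun V hV => (hsolutions V).mp hV, (injective_subtype_restrict_prod hcoverAB).injOn, ?_⟩
  rintro ⟨U, W⟩ hUW
  have hslack : ∀ i (hA : i = o ∨ i ∈ A) (hB : i = o ∨ i ∈ B), U ⟨i, hA⟩ = W ⟨i, hB⟩ := by
    intro i hA hB
    obtain rfl : i = o := by
      rcases hA with hio | hiA
      · exact hio
      · exact hB.resolve_right (Set.disjoint_left.mp hAB hiA)
    exact hUW.1.1.trans hUW.2.1.symm
  obtain ⟨V, rfl, rfl⟩ := exists_subtype_restrict_eq hcoverAB U W hslack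
  exact ⟨V, (hsolutions V).mpr hUW, rfl⟩

end PowerFlow

theorem stmt4_general (n : ℕ) [NeZero n] (Y : Matrix (Fin n) (Fin n) ℂ) (v₀ : ℂ)
    (A B : Set (Fin n))
    (hcover : ∀ i : Fin n, i = 0 ∨ i ∈ A ∨ i ∈ B)
    (hAB : Disjoint A B)
    (hY : ∀ a ∈ A, ∀ b ∈ B, Y a b = 0 ∧ Y b a = 0)
    (PQ : Set (Fin n)) (s : Fin n → ℂ) (p w : Fin n → ℝ) :
    Set.BijOn
      (fun V : Fin n → ℂ =>
        ((fun i : {i : Fin n // i = 0 ∨ i ∈ A} => V i.val),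
         (fun i : {i : Fin n // i = 0 ∨ i ∈ B} => V i.val)))
      -- solution set of the full network
      {V : Fin n → ℂ | V 0 = v₀ ∧ ∀ i, i ≠ 0 →
        (i ∈ PQ → V i * (starRingEnd ℂ) (Y.mulVec V i) = s i) ∧
        (i ∉ PQ → (V i * (starRingEnd ℂ) (Y.mulVec V i)).re = p i ∧
          ‖V i‖ = w i)}
      -- product of the solution sets of the two subnetworks
      (({W : {i : Fin n // i = 0 ∨ i ∈ A} → ℂ | W ⟨0, Or.inl rfl⟩ = v₀ ∧
          ∀ i : {i : Fin n // i = 0 ∨ i ∈ A}, i.val ≠ 0 →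
            (i.val ∈ PQ →
              W i * (starRingEnd ℂ)
                ((Y.submatrix Subtype.val Subtype.val).mulVec W i) = s i.val) ∧
            (i.val ∉ PQ →
              (W i * (starRingEnd ℂ)
                ((Y.submatrix Subtype.val Subtype.val).mulVec W i)).re = p i.val ∧
              ‖W i‖ = w i.val)}) ×ˢ
       ({W : {i : Fin n // i = 0 ∨ i ∈ B} → ℂ | W ⟨0, Or.inl rfl⟩ = v₀ ∧
          ∀ i : {i : Fin n // i = 0 ∨ i ∈ B}, i.val ≠ 0 →
            (i.val ∈ PQ →
              W i * (starRingEnd ℂ)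
                ((Y.submatrix Subtype.val Subtype.val).mulVec W i) = s i.val) ∧
            (i.val ∉ PQ →
              (W i * (starRingEnd ℂ)
                ((Y.submatrix Subtype.val Subtype.val).mulVec W i)).re = p i.val ∧
              ‖W i‖ = w i.val)})) :=
  bijOn_restrict_powerFlowSolutions hcover hAB hY

/-- Network whose buses partition as {0} ∪ A ∪ B with slack bus 0 (voltage v₀) and
Y_{ab} = Y_{ba} = 0 for a ∈ A, b ∈ B. Non-slack buses in `PQ` enforce
V_i conj((YV)_i) = s_i; the remaining non-slack (PV) buses enforce
Re(V_i conj((YV)_i)) = p_i and |V_i| = w_i. Restriction of voltages to the two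
subnetworks {0} ∪ A and {0} ∪ B (with the principal submatrices of Y, the same bus
specifications and slack voltage) is a bijection from the solution set of the full
network onto the Cartesian product of the solution sets of the two subnetworks. -/
theorem stmt4 (n : ℕ) [NeZero n] (Y : Matrix (Fin n) (Fin n) ℂ) (v₀ : ℂ)
    (A B : Set (Fin n))
    (hcover : ∀ i : Fin n, i = 0 ∨ i ∈ A ∨ i ∈ B)
    (hA0 : (0 : Fin n) ∉ A) (hB0 : (0 : Fin n) ∉ B) (hAB : Disjoint A B)
    (hY : ∀ a ∈ A, ∀ b ∈ B, Y a b = 0 ∧ Y b a = 0)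
    (PQ : Set (Fin n)) (s : Fin n → ℂ) (p w : Fin n → ℝ) :
    Set.BijOn
      (fun V : Fin n → ℂ =>
        ((fun i : {i : Fin n // i = 0 ∨ i ∈ A} => V i.val),
         (fun i : {i : Fin n // i = 0 ∨ i ∈ B} => V i.val)))
      -- solution set of the full network
      {V : Fin n → ℂ | V 0 = v₀ ∧ ∀ i, i ≠ 0 →
        (i ∈ PQ → V i * (starRingEnd ℂ) (Y.mulVec V i) = s i) ∧
        (i ∉ PQ → (V i * (starRingEnd ℂ) (Y.mulVec V i)).re = p i ∧
          ‖V i‖ = w i)}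
      -- product of the solution sets of the two subnetworks
      (({W : {i : Fin n // i = 0 ∨ i ∈ A} → ℂ | W ⟨0, Or.inl rfl⟩ = v₀ ∧
          ∀ i : {i : Fin n // i = 0 ∨ i ∈ A}, i.val ≠ 0 →
            (i.val ∈ PQ →
              W i * (starRingEnd ℂ)
                ((Y.submatrix Subtype.val Subtype.val).mulVec W i) = s i.val) ∧
            (i.val ∉ PQ →
              (W i * (starRingEnd ℂ)
                ((Y.submatrix Subtype.val Subtype.val).mulVec W i)).re = p i.val ∧
              ‖W i‖ = w i.val)}) ×ˢ
       ({W : {i : Fin n // i = 0 ∨ i ∈ B} → ℂ | W ⟨0, Or.inl rfl⟩ = v₀ ∧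
          ∀ i : {i : Fin n // i = 0 ∨ i ∈ B}, i.val ≠ 0 →
            (i.val ∈ PQ →
              W i * (starRingEnd ℂ)
                ((Y.submatrix Subtype.val Subtype.val).mulVec W i) = s i.val) ∧
            (i.val ∉ PQ →
              (W i * (starRingEnd ℂ)
                ((Y.submatrix Subtype.val Subtype.val).mulVec W i)).re = p i.val ∧
              ‖W i‖ = w i.val)})) :=
  stmt4_general n Y v₀ A B hcover hAB hY PQ s p w
end

section
/- Consider a two-bus network with slack bus 1 having fixed voltage v₁ ∈ ℂ and PQ bus 2 with specified complex injection s ∈ ℂ, with admittance matrix entries Y₂₁, Y₂₂ ∈ ℂ satisfying Y₂₁ · v₁ ≠ 0. Then the set { w ∈ ℂ : w · conj(Y₂₁ v₁ + Y₂₂ w) = s } of power flow solutions for the voltage at bus 2 has at most two elements. -/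
/-- A two-bus network (slack bus 1 with voltage v₁, PQ bus 2 with injection s)
with Y₂₁ v₁ ≠ 0 has at most two power flow solutions for the voltage at bus 2. -/
theorem stmt10 (v₁ Y21 Y22 s : ℂ) (h : Y21 * v₁ ≠ 0) :
    {w : ℂ | w * (starRingEnd ℂ) (Y21 * v₁ + Y22 * w) = s}.encard ≤ 2 := by
  set A : ℂ := (starRingEnd ℂ) (Y21 * v₁) with hAdef
  have hA : A ≠ 0 := by simpa [hAdef] using h
  set B : ℂ := (starRingEnd ℂ) Y22 with hBdef
  set S := {w : ℂ | w * (starRingEnd ℂ) (Y21 * v₁ + Y22 * w) = s} with hS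
  have hlin : ∀ w ∈ S, A * w + B * (Complex.normSq w : ℂ) = s := by
    intro w hw
    have h3 : w * (starRingEnd ℂ) w = (Complex.normSq w : ℂ) := Complex.mul_conj w
    have hw' : w * (starRingEnd ℂ) (Y21 * v₁ + Y22 * w) = s := hw
    rw [map_add, map_mul (starRingEnd ℂ) Y22 w] at hw'
    linear_combination hw' - B * h3
  have hinj : Set.InjOn (fun w : ℂ => (Complex.normSq w : ℂ)) S := by
    intro w₁ hw₁ w₂ hw₂ he
    have e1 := hlin w₁ hw₁
    have e2 := hlin w₂ hw₂
    simp only at he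
    rw [he] at e1
    have : A * w₁ = A * w₂ := by linear_combination e1 - e2
    exact mul_left_cancel₀ hA this
  by_cases hb : Y22 = 0
  · have hB0 : B = 0 := by simp [hBdef, hb]
    have hsub : S ⊆ {s / A} := by
      intro w hw
      have := hlin w hw
      rw [hB0] at this
      simp only [zero_mul, add_zero] at this
      simp only [Set.mem_singleton_iff]
      field_simp
      linear_combination this
    calc S.encard ≤ ({s / A} : Set ℂ).encard := Set.encard_mono hsub
      _ = 1 := Set.encard_singleton _
      _ ≤ 2 := by norm_num
  · have hB : B ≠ 0 := by simpa [hBdef] using hb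
    set a' : ℂ := B * (starRingEnd ℂ) B with ha'
    set b' : ℂ := -(B * (starRingEnd ℂ) s + (starRingEnd ℂ) B * s + A * (starRingEnd ℂ) A) with hb'
    set c' : ℂ := s * (starRingEnd ℂ) s with hc'
    have ha'0 : a' ≠ 0 := mul_ne_zero hB (by simpa using hB)
    obtain ⟨σ, hσ⟩ := IsAlgClosed.exists_eq_mul_self (discrim a' b' c')
    set r₁ : ℂ := (-b' + σ) / (2 * a') with hr₁
    set r₂ : ℂ := (-b' - σ) / (2 * a') with hr₂
    have key : ∀ w ∈ S, ((Complex.normSq w : ℂ)) = r₁ ∨ ((Complex.normSq w : ℂ)) = r₂ := by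
      intro w hw
      set t : ℂ := (Complex.normSq w : ℂ) with ht
      have h3 : w * (starRingEnd ℂ) w = t := Complex.mul_conj w
      have h1 : A * w + B * t = s := hlin w hw
      have h2 : (starRingEnd ℂ) A * (starRingEnd ℂ) w + (starRingEnd ℂ) B * t = (starRingEnd ℂ) s := by
        have h1' := congrArg (starRingEnd ℂ) h1
        simp only [map_add, map_mul] at h1'
        rw [ht, Complex.conj_ofReal, ← ht] at h1'
        exact h1'
      have hq : a' * (t * t) + b' * t + c' = 0 := by
        rw [ha', hb', hc']
        linear_combination ((starRingEnd ℂ) B * t - (starRingEnd ℂ) s) * h1 - A * w * h2 + A * (starRingEnd ℂ) A * h3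
      exact (quadratic_eq_zero_iff ha'0 hσ t).mp hq
    have himg : (fun w : ℂ => (Complex.normSq w : ℂ)) '' S ⊆ {r₁, r₂} := by
      rintro z ⟨w, hw, rfl⟩
      exact key w hw
    calc S.encard = ((fun w : ℂ => (Complex.normSq w : ℂ)) '' S).encard := (hinj.encard_image).symm
      _ ≤ ({r₁, r₂} : Set ℂ).encard := Set.encard_mono himg
      _ ≤ 2 := by
          apply le_trans (Set.encard_insert_le _ _)
          rw [Set.encard_singleton]
          norm_num
end
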